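/- Consider the system ṙ = Ar with A = diag(λ₁, λ₂, λ₃), λ₁λ₂λ₃(λ₂−λ₁)(λ₃−λ₁)(λ₃−λ₂) ≠ 0, and initial value with x₀y₀z₀ ≠ 0. Then the torsion of the trajectory r(t) = (x₀e^{λ₁t}, y₀e^{λ₂t}, z₀e^{λ₃t}) equals τ(t) = λ₁λ₂λ₃(λ₂−λ₁)(λ₃−λ₁)(λ₃−λ₂) x₀y₀z₀ e^{(λ₁+λ₂+λ₃)t} / { [λ₂λ₃(λ₃−λ₂)y₀z₀]² e^{2(λ₂+λ₃)t} + [λ₁λ₃(λ₁−λ₃)x₀z₀]² e^{2(λ₁+λ₃)t} + [λ₁λ₂(λ₂−λ₁)x₀y₀]² e^{2(λ₁+λ₂)t} }. -/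
import Mathlib


open Matrix Real

noncomputable def e3norm (a : Fin 3 → ℝ) : ℝ := Real.sqrt (∑ i, (a i) ^ 2)

/-- Torsion of a space curve `r`. -/
noncomputable def tors (r : ℝ → Fin 3 → ℝ) (t : ℝ) : ℝ :=
  (crossProduct (deriv r t) (deriv (deriv r) t) ⬝ᵥ deriv (deriv (deriv r)) t) /
    (e3norm (crossProduct (deriv r t) (deriv (deriv r) t))) ^ 2

lemma key_deriv (c l : ℝ) (t : ℝ) :
    HasDerivAt (fun s : ℝ => c * Real.exp (l * s)) (c * l * Real.exp (l * t)) t := by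
  have h : HasDerivAt (fun s : ℝ => Real.exp (l * s)) (Real.exp (l * t) * (l * 1)) t :=
    ((hasDerivAt_id t).const_mul l).exp
  simpa [mul_comm, mul_assoc, mul_left_comm] using h.const_mul c

lemma deriv_triple (f g h : ℝ → ℝ) (f' g' h' : ℝ → ℝ)
    (hf : ∀ t, HasDerivAt f (f' t) t) (hg : ∀ t, HasDerivAt g (g' t) t)
    (hh : ∀ t, HasDerivAt h (h' t) t) :
    deriv (fun t => ![f t, g t, h t]) = fun t => ![f' t, g' t, h' t] := by
  funext t
  have : HasDerivAt (fun t => ![f t, g t, h t]) ![f' t, g' t, h' t] t := by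
    rw [hasDerivAt_pi]
    intro i
    fin_cases i
    · simpa using hf t
    · simpa using hg t
    · simpa using hh t
  exact this.deriv

theorem torsion_formula_diagonal
    (l1 l2 l3 x0 y0 z0 : ℝ)
    (hl : l1 * l2 * l3 * (l2 - l1) * (l3 - l1) * (l3 - l2) ≠ 0)
    (h0 : x0 * y0 * z0 ≠ 0)
    (r : ℝ → Fin 3 → ℝ)
    (hr : r = fun t => ![x0 * Real.exp (l1 * t), y0 * Real.exp (l2 * t),
      z0 * Real.exp (l3 * t)]) :
    ∀ t : ℝ,
      tors r t =
        l1 * l2 * l3 * (l2 - l1) * (l3 - l1) * (l3 - l2) * (x0 * y0 * z0) *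
            Real.exp ((l1 + l2 + l3) * t) /
          ((l2 * l3 * (l3 - l2) * y0 * z0) ^ 2 * Real.exp (2 * (l2 + l3) * t) +
            (l1 * l3 * (l1 - l3) * x0 * z0) ^ 2 * Real.exp (2 * (l1 + l3) * t) +
            (l1 * l2 * (l2 - l1) * x0 * y0) ^ 2 * Real.exp (2 * (l1 + l2) * t)) := by
  intro t
  have d1 : deriv r = fun t => ![x0 * l1 * Real.exp (l1 * t), y0 * l2 * Real.exp (l2 * t),
      z0 * l3 * Real.exp (l3 * t)] := by
    subst hr
    exact deriv_triple _ _ _ _ _ _ (key_deriv x0 l1) (key_deriv y0 l2) (key_deriv z0 l3)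
  have d2 : deriv (deriv r) = fun t => ![x0 * l1 * l1 * Real.exp (l1 * t),
      y0 * l2 * l2 * Real.exp (l2 * t), z0 * l3 * l3 * Real.exp (l3 * t)] := by
    rw [d1]
    simpa [mul_assoc] using deriv_triple _ _ _ _ _ _ (key_deriv (x0 * l1) l1)
      (key_deriv (y0 * l2) l2) (key_deriv (z0 * l3) l3)
  have d3 : deriv (deriv (deriv r)) = fun t => ![x0 * l1 * l1 * l1 * Real.exp (l1 * t),
      y0 * l2 * l2 * l2 * Real.exp (l2 * t), z0 * l3 * l3 * l3 * Real.exp (l3 * t)] := by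
    rw [d2]
    simpa [mul_assoc] using deriv_triple _ _ _ _ _ _ (key_deriv (x0 * l1 * l1) l1)
      (key_deriv (y0 * l2 * l2) l2) (key_deriv (z0 * l3 * l3) l3)
  rw [tors, d3, d2, d1]
  set A := Real.exp (l1 * t) with hA
  set B := Real.exp (l2 * t) with hB
  set C := Real.exp (l3 * t) with hC
  have eN : Real.exp ((l1 + l2 + l3) * t) = A * B * C := by
    rw [hA, hB, hC, ← Real.exp_add, ← Real.exp_add]; ring_nf
  have e1 : Real.exp (2 * (l2 + l3) * t) = B ^ 2 * C ^ 2 := by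
    rw [hB, hC, sq, sq, ← Real.exp_add, ← Real.exp_add, ← Real.exp_add]
    ring_nf
  have e2 : Real.exp (2 * (l1 + l3) * t) = A ^ 2 * C ^ 2 := by
    rw [hA, hC, sq, sq, ← Real.exp_add, ← Real.exp_add, ← Real.exp_add]
    ring_nf
  have e3 : Real.exp (2 * (l1 + l2) * t) = A ^ 2 * B ^ 2 := by
    rw [hA, hB, sq, sq, ← Real.exp_add, ← Real.exp_add, ← Real.exp_add]
    ring_nf
  rw [eN, e1, e2, e3]
  have hsq : ∀ v : Fin 3 → ℝ, (e3norm v) ^ 2 = ∑ i, (v i) ^ 2 := by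
    intro v
    rw [e3norm, Real.sq_sqrt]
    positivity
  rw [hsq]
  simp only [crossProduct, dotProduct, Fin.sum_univ_three]
  simp [Matrix.cons_val_zero, Matrix.cons_val_one, Matrix.head_cons]
  congr 1 <;> ring
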